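/- arXiv:1807.01496 — 9 statements merged into one kernel-verified Lean document; each statement's English description precedes it below -/
import Mathlib

section
/- Let A be the adjacency matrix of a connected undirected, unweighted graph on n ≥ 2 nodes, let d = A·1 be the degree vector, and let x ∈ ℝⁿ be an eigenvector of A with all entries strictly positive, A·x = λ·x (the eigenvector centrality vector). Then the generalized friendship paradox inequality holds for eigenvector centrality: n·(dᵀx) ≥ (1ᵀd)·(1ᵀx), i.e., dᵀx/(1ᵀd) ≥ (1ᵀx)/n. -/
open Matrix

/-- **Eigenvector centrality paradox.** For any connected graph on `n ≥ 2` nodes, the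
generalized friendship paradox inequality holds for eigenvector centrality:
`n·(dᵀx) ≥ (1ᵀd)·(1ᵀx)` where `x` is the Perron–Frobenius eigenvector. -/
theorem eigenvector_centrality_friendship_paradox (n : ℕ) (hn : 2 ≤ n)
    (A : Matrix (Fin n) (Fin n) ℝ)
    (hA01 : ∀ i j, A i j = 0 ∨ A i j = 1)
    (hsym : ∀ i j, A i j = A j i)
    (hdiag : ∀ i, A i i = 0)
    (hconn : ∀ i j, ∃ k : ℕ, 1 ≤ k ∧ 0 < (A ^ k) i j)
    (x : Fin n → ℝ) (hx : ∀ i, 0 < x i)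
    (lam : ℝ) (heig : A.mulVec x = lam • x)
    (d : Fin n → ℝ) (hd : d = A.mulVec 1) :
    (n : ℝ) * (d ⬝ᵥ x) ≥ (∑ i, d i) * (∑ i, x i) := by
  have hApos : ∀ i j, 0 ≤ A i j := by
    intro i j; rcases hA01 i j with h | h <;> rw [h] <;> norm_num
  have hS : 0 < ∑ i, x i :=
    Finset.sum_pos (fun i _ => hx i) ⟨⟨0, by omega⟩, Finset.mem_univ _⟩
  have hlam : ∀ i, ∑ j, A i j * x j = lam * x i := by
    intro i
    have := congrFun heig i
    simpa [mulVec, dotProduct] using this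
  -- degree entries
  have hdi : ∀ i, d i = ∑ j, A i j := by
    intro i; simp [hd, mulVec, dotProduct]
  -- d ⬝ᵥ x = lam * ∑ x
  have hdx : d ⬝ᵥ x = lam * ∑ i, x i := by
    have : d ⬝ᵥ x = ∑ i, (∑ j, A i j) * x i := by
      simp [dotProduct, hdi]
    rw [this]
    calc ∑ i, (∑ j, A i j) * x i = ∑ i, ∑ j, A i j * x i := by
          simp [Finset.sum_mul]
      _ = ∑ j, ∑ i, A i j * x i := Finset.sum_comm
      _ = ∑ j, ∑ i, A j i * x i := by
          refine Finset.sum_congr rfl fun j _ => Finset.sum_congr rfl fun i _ => ?_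
          rw [hsym]
      _ = ∑ j, lam * x j := by
          refine Finset.sum_congr rfl fun j _ => hlam j
      _ = lam * ∑ i, x i := by rw [Finset.mul_sum]
  -- n * lam = ∑ i, ∑ j, A i j * (x j / x i)
  have hnlam : (n : ℝ) * lam = ∑ i, ∑ j, A i j * (x j / x i) := by
    have : ∀ i : Fin n, ∑ j, A i j * (x j / x i) = lam := by
      intro i
      have hxi := (hx i).ne'
      calc ∑ j, A i j * (x j / x i) = (∑ j, A i j * x j) / x i := by
            rw [Finset.sum_div]
            exact Finset.sum_congr rfl fun j _ => by ring
        _ = lam * x i / x i := by rw [hlam]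
        _ = lam := by field_simp
    rw [Finset.sum_congr rfl fun i _ => this i]
    simp [mul_comm]
  -- the AM-GM step: 2 * (n * lam) ≥ 2 * ∑∑ A
  have key : (∑ i, ∑ j, A i j) ≤ (n : ℝ) * lam := by
    have h2 : 2 * ((n : ℝ) * lam) = ∑ i, ∑ j, A i j * (x j / x i + x i / x j) := by
      have hswap : (∑ i, ∑ j, A i j * (x j / x i))
          = ∑ i, ∑ j, A i j * (x i / x j) := by
        rw [Finset.sum_comm]
        refine Finset.sum_congr rfl fun i _ => Finset.sum_congr rfl fun j _ => ?_
        rw [hsym]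
      calc 2 * ((n : ℝ) * lam)
          = (∑ i, ∑ j, A i j * (x j / x i)) + ∑ i, ∑ j, A i j * (x i / x j) := by
            rw [hnlam, ← hswap]; ring
        _ = ∑ i, ∑ j, A i j * (x j / x i + x i / x j) := by
            rw [← Finset.sum_add_distrib]
            refine Finset.sum_congr rfl fun i _ => ?_
            rw [← Finset.sum_add_distrib]
            exact Finset.sum_congr rfl fun j _ => by ring
    have hge : ∑ i, ∑ j, A i j * (x j / x i + x i / x j) ≥ ∑ i, ∑ j, A i j * 2 := by
      refine Finset.sum_le_sum fun i _ => Finset.sum_le_sum fun j _ => ?_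
      refine mul_le_mul_of_nonneg_left ?_ (hApos i j)
      have h1 := hx i
      have h2 := hx j
      rw [div_add_div _ _ (ne_of_gt h1) (ne_of_gt h2), le_div_iff₀ (by positivity)]
      nlinarith [sq_nonneg (x i - x j)]
    have : 2 * (∑ i, ∑ j, A i j) ≤ 2 * ((n : ℝ) * lam) := by
      rw [h2]
      calc 2 * (∑ i, ∑ j, A i j) = ∑ i, ∑ j, A i j * 2 := by
            rw [Finset.mul_sum]
            exact Finset.sum_congr rfl fun i _ => by rw [Finset.mul_sum]; exact Finset.sum_congr rfl fun j _ => mul_comm _ _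
        _ ≤ _ := hge
    linarith
  -- conclude
  have hsumd : ∑ i, d i = ∑ i, ∑ j, A i j := Finset.sum_congr rfl fun i _ => hdi i
  rw [hdx, hsumd, ge_iff_le]
  calc (∑ i, ∑ j, A i j) * (∑ i, x i) ≤ ((n : ℝ) * lam) * (∑ i, x i) :=
        mul_le_mul_of_nonneg_right key hS.le
    _ = (n : ℝ) * (lam * ∑ i, x i) := by ring
end

section
/- Let A be the adjacency matrix of an undirected, unweighted graph on n nodes with at least one edge, let d = A·1, and let c : ℕ → ℝ be a sequence of nonnegative coefficients such that for every node i the series xᵢ = ∑ₖ cₖ·(Aᵏ·1)ᵢ converges (is summable). If for every k ≥ 1 with cₖ > 0 the inequality n·(1ᵀA^{k+1}·1) ≥ (1ᵀAᵏ·1)·(1ᵀA·1) holds, then the generalized friendship paradox inequality holds for x: n·(dᵀx) ≥ (1ᵀd)·(1ᵀx). -/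
open Matrix

/-- Sufficient condition for the generalized friendship paradox for matrix-function
centrality `x = (c₀ I + c₁ A + c₂ A² + ⋯)·1`: if, for every `k ≥ 1` with `cₖ > 0`,
`n·(1ᵀA^{k+1}·1) ≥ (1ᵀAᵏ·1)·(1ᵀA·1)`, then `n·(dᵀx) ≥ (1ᵀd)·(1ᵀx)`. -/
theorem matrix_function_centrality_paradox_sufficient (n : ℕ)
    (A : Matrix (Fin n) (Fin n) ℝ)
    (hA01 : ∀ i j, A i j = 0 ∨ A i j = 1)
    (hsym : ∀ i j, A i j = A j i)
    (hdiag : ∀ i, A i i = 0)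
    (hedge : ∃ i j, A i j ≠ 0)
    (d : Fin n → ℝ) (hd : d = A.mulVec 1)
    (c : ℕ → ℝ) (hc : ∀ k, 0 ≤ c k)
    (hsummable : ∀ i, Summable fun k : ℕ => c k * ((A ^ k).mulVec 1) i)
    (x : Fin n → ℝ) (hx : ∀ i, x i = ∑' k : ℕ, c k * ((A ^ k).mulVec 1) i)
    (hcond : ∀ k : ℕ, 1 ≤ k → 0 < c k →
      (n : ℝ) * (∑ i, ∑ j, (A ^ (k + 1)) i j) ≥
        (∑ i, ∑ j, (A ^ k) i j) * (∑ i, ∑ j, A i j)) :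
    (n : ℝ) * (d ⬝ᵥ x) ≥ (∑ i, d i) * (∑ i, x i) := by
  set v : ℕ → Fin n → ℝ := fun k i => ((A ^ k).mulVec 1) i with hv
  set S : ℕ → ℝ := fun k => ∑ i, ∑ j, (A ^ k) i j with hS
  have hAT : Aᵀ = A := by ext i j; exact hsym j i
  have hvsum : ∀ k, ∑ i, v k i = S k := by
    intro k; simp [hv, hS, Matrix.mulVec, dotProduct]
  have hdv : ∀ k, ∑ i, d i * v k i = S (k + 1) := by
    intro k
    have : (A.mulVec 1) ⬝ᵥ ((A ^ k).mulVec 1) = ((A ^ (k+1)).mulVec 1) ⬝ᵥ 1 := by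
      rw [dotProduct_comm, Matrix.dotProduct_mulVec, ← Matrix.mulVec_transpose, hAT,
        Matrix.mulVec_mulVec, ← pow_succ']
    simpa [hd, dotProduct, hS, Matrix.mulVec, hv] using this
  have hsum1 : ∀ i, Summable fun k => d i * (c k * v k i) := fun i =>
    (hsummable i).mul_left _
  have hsumS : Summable fun k => c k * S (k + 1) := by
    have : Summable fun k => ∑ i, d i * (c k * v k i) :=
      summable_sum (fun i _ => hsum1 i)
    convert this using 2 with k
    rw [← hdv k, Finset.mul_sum]
    congr 1; ext i; ring
  have hsumS0 : Summable fun k => c k * S k := by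
    have : Summable fun k => ∑ i, c k * v k i :=
      summable_sum (fun i _ => hsummable i)
    convert this using 2 with k
    rw [← hvsum k, Finset.mul_sum]
  have hdx : d ⬝ᵥ x = ∑' k, c k * S (k + 1) := by
    rw [dotProduct]
    calc ∑ i, d i * x i = ∑ i, ∑' k, d i * (c k * v k i) := by
          refine Finset.sum_congr rfl fun i _ => ?_
          rw [hx i, ← tsum_mul_left]
      _ = ∑' k, ∑ i, d i * (c k * v k i) := (Summable.tsum_finsetSum (fun i _ => hsum1 i)).symm
      _ = ∑' k, c k * S (k + 1) := by
          refine tsum_congr fun k => ?_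
          rw [← hdv k, Finset.mul_sum]
          congr 1; ext i; ring
  have hxx : ∑ i, x i = ∑' k, c k * S k := by
    calc ∑ i, x i = ∑ i, ∑' k, c k * v k i := Finset.sum_congr rfl fun i _ => hx i
      _ = ∑' k, ∑ i, c k * v k i := (Summable.tsum_finsetSum (fun i _ => hsummable i)).symm
      _ = ∑' k, c k * S k := by
          refine tsum_congr fun k => ?_
          rw [← hvsum k, Finset.mul_sum]
  have hdS : ∑ i, d i = S 1 := by
    simp [hd, hS, Matrix.mulVec, dotProduct]
  have hS0 : S 0 = n := by simp [hS, Matrix.one_apply]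
  rw [hdx, hxx, hdS, ← tsum_mul_left, ← tsum_mul_left]
  refine Summable.tsum_le_tsum (fun k => ?_) (hsumS0.mul_left _) (hsumS.mul_left _)
  rcases Nat.eq_zero_or_pos k with rfl | hk
  · rw [hS0]; ring_nf; rfl
  · rcases eq_or_lt_of_le (hc k) with h0 | h0
    · simp [← h0]
    · have h1 : (n:ℝ) * S (k+1) ≥ S k * S 1 := by
        simpa [hS, pow_one] using hcond k hk h0
      nlinarith [h1, hc k]
end

section
/- (Lagarias et al.) Let A be an n×n real symmetric matrix with nonnegative entries, and let r and s be positive integers such that r + s is even. Then n·(1ᵀA^{r+s}·1) ≥ (1ᵀAʳ·1)·(1ᵀAˢ·1), where 1 is the all-ones vector: the total number of walks of length r+s, scaled by n, dominates the product of the total numbers of walks of lengths r and s. -/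
open Matrix Finset

lemma mul_nonneg_of_nonpos_nonpos' {a b : ℝ} (ha : a ≤ 0) (hb : b ≤ 0) : 0 ≤ a * b := by nlinarith

-- pointwise sign lemma
lemma pow_sub_mul_pow_sub_nonneg {r s : ℕ} (h : Even (r + s)) (a b : ℝ) :
    0 ≤ (a ^ r - b ^ r) * (a ^ s - b ^ s) := by
  have hiff : Even r ↔ Even s := by
    rcases Nat.even_add.mp h with h'; exact h'
  by_cases her : Even r
  · have hes : Even s := hiff.mp her
    rw [← her.pow_abs a, ← her.pow_abs b, ← hes.pow_abs a, ← hes.pow_abs b]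
    rcases le_total |a| |b| with hab | hab
    · exact mul_nonneg_of_nonpos_nonpos'
        (sub_nonpos.2 (pow_le_pow_left₀ (abs_nonneg _) hab _))
        (sub_nonpos.2 (pow_le_pow_left₀ (abs_nonneg _) hab _))
    · exact mul_nonneg
        (sub_nonneg.2 (pow_le_pow_left₀ (abs_nonneg _) hab _))
        (sub_nonneg.2 (pow_le_pow_left₀ (abs_nonneg _) hab _))
  · have hos : ¬ Even s := fun hs => her (hiff.mpr hs)
    have hor : Odd r := Nat.not_even_iff_odd.mp her
    have hos' : Odd s := Nat.not_even_iff_odd.mp hos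
    rcases le_total a b with hab | hab
    · exact mul_nonneg_of_nonpos_nonpos'
        (sub_nonpos.2 ((hor.strictMono_pow (R := ℝ)).monotone hab))
        (sub_nonpos.2 ((hos'.strictMono_pow (R := ℝ)).monotone hab))
    · exact mul_nonneg
        (sub_nonneg.2 ((hor.strictMono_pow (R := ℝ)).monotone hab))
        (sub_nonneg.2 ((hos'.strictMono_pow (R := ℝ)).monotone hab))

-- weighted Chebyshev
lemma weighted_chebyshev {n : ℕ} (w F G : Fin n → ℝ) (hw : ∀ i, 0 ≤ w i)
    (hFG : ∀ i j, 0 ≤ (F i - F j) * (G i - G j)) :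
    (∑ i, w i * F i) * (∑ i, w i * G i) ≤ (∑ i, w i) * (∑ i, w i * (F i * G i)) := by
  have key : 0 ≤ ∑ i, ∑ j, w i * w j * ((F i - F j) * (G i - G j)) := by
    apply Finset.sum_nonneg; intro i _
    apply Finset.sum_nonneg; intro j _
    exact mul_nonneg (mul_nonneg (hw i) (hw j)) (hFG i j)
  have expand : ∑ i, ∑ j, w i * w j * ((F i - F j) * (G i - G j))
      = 2 * ((∑ i, w i) * (∑ i, w i * (F i * G i))
        - (∑ i, w i * F i) * (∑ i, w i * G i)) := by
    have h1 : (∑ i, w i) * (∑ i, w i * (F i * G i))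
        = ∑ i, ∑ j, w i * (w j * (F j * G j)) := Finset.sum_mul_sum _ _ _ _
    have h1' : (∑ i, w i * (F i * G i)) * (∑ i, w i)
        = ∑ i, ∑ j, (w i * (F i * G i)) * w j := Finset.sum_mul_sum _ _ _ _
    have h2 : (∑ i, w i * F i) * (∑ i, w i * G i)
        = ∑ i, ∑ j, (w i * F i) * (w j * G j) := Finset.sum_mul_sum _ _ _ _
    have h2' : (∑ i, w i * G i) * (∑ i, w i * F i)
        = ∑ i, ∑ j, (w i * G i) * (w j * F j) := Finset.sum_mul_sum _ _ _ _
    have h2'' : (∑ i, w i * F i) * (∑ i, w i * G i)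
        = ∑ i, ∑ j, (w i * G i) * (w j * F j) := by
      rw [mul_comm]; exact h2'
    calc ∑ i, ∑ j, w i * w j * ((F i - F j) * (G i - G j))
        = ∑ i, ∑ j, ((w i * (F i * G i)) * w j + w i * (w j * (F j * G j))
            - (w i * F i) * (w j * G j) - (w i * G i) * (w j * F j)) := by
          apply Finset.sum_congr rfl; intro i _
          apply Finset.sum_congr rfl; intro j _
          ring
      _ = 2 * ((∑ i, w i) * (∑ i, w i * (F i * G i))
            - (∑ i, w i * F i) * (∑ i, w i * G i)) := by
          simp only [Finset.sum_sub_distrib, Finset.sum_add_distrib,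
            ← h1, ← h1', ← h2, ← h2'']
          ring
  linarith [key, expand.symm ▸ key, expand ▸ key]

/-- **Lagarias–Mazo–Shepp–McKay inequality.** For an `n×n` real symmetric matrix `A`
with nonnegative entries and positive integers `r, s` with `r + s` even,
`n·(1ᵀA^{r+s}·1) ≥ (1ᵀAʳ·1)·(1ᵀAˢ·1)`. -/
theorem lagarias_walk_inequality (n : ℕ) (A : Matrix (Fin n) (Fin n) ℝ)
    (hsym : ∀ i j, A i j = A j i)
    (hnonneg : ∀ i j, 0 ≤ A i j)
    (r s : ℕ) (hr : 1 ≤ r) (hs : 1 ≤ s) (heven : Even (r + s)) :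
    (n : ℝ) * (∑ i, ∑ j, (A ^ (r + s)) i j) ≥
      (∑ i, ∑ j, (A ^ r) i j) * (∑ i, ∑ j, (A ^ s) i j) := by
  have hA : A.IsHermitian := by
    ext i j; simp [conjTranspose_apply, hsym i j]
  set U : Matrix (Fin n) (Fin n) ℝ := (hA.eigenvectorUnitary : Matrix (Fin n) (Fin n) ℝ) with hU
  set lam : Fin n → ℝ := hA.eigenvalues with hlam
  have hUU : U * star U = 1 := by
    have := (Matrix.mem_unitaryGroup_iff).mp hA.eigenvectorUnitary.2
    simpa [hU] using this
  have hUU' : star U * U = 1 := by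
    have := (Matrix.mem_unitaryGroup_iff').mp hA.eigenvectorUnitary.2
    simpa [hU] using this
  have hspec : A = U * diagonal lam * star U := by
    have := hA.spectral_theorem
    simpa [hU, hlam, Function.comp] using this
  have hpow : ∀ k, A ^ k = U * diagonal (fun i => lam i ^ k) * star U := by
    intro k
    induction k with
    | zero => simp [pow_zero, hUU]
    | succ k ih =>
      rw [pow_succ, ih, hspec]
      rw [show U * diagonal (fun i => lam i ^ k) * star U * (U * diagonal lam * star U)
          = U * (diagonal (fun i => lam i ^ k) * (star U * U) * diagonal lam) * star U by
        simp only [Matrix.mul_assoc]]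
      rw [hUU']
      simp [Matrix.diagonal_mul_diagonal, pow_succ]
  set c : Fin n → ℝ := fun l => ∑ i, U i l with hc
  have hsum : ∀ k, (∑ i, ∑ j, (A ^ k) i j) = ∑ l, (c l)^2 * lam l ^ k := by
    intro k
    rw [hpow k]
    have hentry : ∀ i j, (U * diagonal (fun i => lam i ^ k) * star U) i j
        = ∑ l, U i l * lam l ^ k * U j l := by
      intro i j
      rw [Matrix.mul_apply]
      apply Finset.sum_congr rfl
      intro l _
      rw [Matrix.mul_diagonal, Matrix.star_apply, star_trivial]
    simp only [hentry]
    calc ∑ i, ∑ j, ∑ l, U i l * lam l ^ k * U j l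
        = ∑ i, ∑ l, ∑ j, U i l * lam l ^ k * U j l := by
          exact Finset.sum_congr rfl fun i _ => Finset.sum_comm
      _ = ∑ l, ∑ i, ∑ j, U i l * lam l ^ k * U j l := Finset.sum_comm
      _ = ∑ l, (c l)^2 * lam l ^ k := by
          apply Finset.sum_congr rfl; intro l _
          simp only [← Finset.mul_sum, ← Finset.sum_mul]
          simp only [hc]
          ring
  have hmul : ∀ i j, ∑ l, U i l * U j l = (1 : Matrix (Fin n) (Fin n) ℝ) i j := by
    intro i j
    rw [← hUU, Matrix.mul_apply]
    simp [Matrix.star_apply]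
  have hn : (n : ℝ) = ∑ l, (c l)^2 := by
    have : ∑ l, (c l)^2 = ∑ l, ∑ i, ∑ j, U i l * U j l := by
      apply Finset.sum_congr rfl; intro l _
      simp only [hc, sq, Finset.sum_mul_sum]
    rw [this, Finset.sum_comm]
    rw [show ∑ i, ∑ l, ∑ j, U i l * U j l = ∑ i, ∑ j, ∑ l, U i l * U j l from
      Finset.sum_congr rfl fun i _ => Finset.sum_comm]
    simp only [hmul]
    simp [Matrix.one_apply]
  rw [ge_iff_le, hsum, hsum, hsum, hn]
  have h := weighted_chebyshev (fun l => (c l)^2) (fun l => lam l ^ r)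
    (fun l => lam l ^ s) (fun l => sq_nonneg _)
    (fun i j => pow_sub_mul_pow_sub_nonneg heven _ _)
  simp only [← pow_add] at h
  exact h
end

section
/- Let A be the adjacency matrix of an undirected, unweighted graph on n nodes with at least one edge, let d = A·1, and let c : ℕ → ℝ be nonnegative coefficients with cₖ = 0 for all even k, such that for every node i the series xᵢ = ∑ₖ cₖ·(Aᵏ·1)ᵢ converges. Then the generalized friendship paradox inequality holds: n·(dᵀx) ≥ (1ᵀd)·(1ᵀx). -/
open Matrix


lemma cheb_aux {n : ℕ} (w p : Fin n → ℝ) (hw : ∀ i, 0 ≤ w i) {k : ℕ} (hk : Odd k) :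
    (∑ i, w i * p i) * (∑ i, w i * p i ^ k) ≤ (∑ i, w i) * (∑ i, w i * p i ^ (k + 1)) := by
  have h2 : (0:ℝ) ≤ ∑ i, ∑ j, w i * w j * ((p i - p j) * (p i ^ k - p j ^ k)) := by
    apply Finset.sum_nonneg; intro i _; apply Finset.sum_nonneg; intro j _
    apply mul_nonneg (mul_nonneg (hw i) (hw j))
    rcases le_total (p j) (p i) with h | h
    · have hpk := (hk.strictMono_pow (R := ℝ)).monotone h; nlinarith
    · have hpk := (hk.strictMono_pow (R := ℝ)).monotone h; nlinarith
  have hexp : ∑ i, ∑ j, w i * w j * ((p i - p j) * (p i ^ k - p j ^ k))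
      = 2 * ((∑ i, w i) * (∑ i, w i * (p i * p i ^ k))
        - (∑ i, w i * p i) * (∑ i, w i * p i ^ k)) := by
    calc ∑ i, ∑ j, w i * w j * ((p i - p j) * (p i ^ k - p j ^ k))
        = ∑ i, (w i * (p i * p i ^ k) * (∑ j, w j) + w i * (∑ j, w j * (p j * p j ^ k))
            - w i * p i * (∑ j, w j * p j ^ k) - w i * p i ^ k * (∑ j, w j * p j)) := by
          apply Finset.sum_congr rfl; intro i _
          rw [Finset.mul_sum, Finset.mul_sum, Finset.mul_sum, Finset.mul_sum,
            ← Finset.sum_add_distrib, ← Finset.sum_sub_distrib, ← Finset.sum_sub_distrib]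
          apply Finset.sum_congr rfl; intro j _; ring
      _ = 2 * ((∑ i, w i) * (∑ i, w i * (p i * p i ^ k))
            - (∑ i, w i * p i) * (∑ i, w i * p i ^ k)) := by
          simp only [Finset.sum_add_distrib, Finset.sum_sub_distrib, ← Finset.sum_mul,
            ← Finset.mul_sum]
          ring
  have : ∀ i, w i * p i ^ (k+1) = w i * (p i * p i ^ k) := by
    intro i; rw [pow_succ']
  simp only [this]
  linarith

/-- The generalized friendship paradox holds for odd power-series centrality:
if `cₖ = 0` for all even `k`, then `n·(dᵀx) ≥ (1ᵀd)·(1ᵀx)` for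
`x = (c₁ A + c₃ A³ + ⋯)·1`. -/
theorem odd_power_series_centrality_paradox (n : ℕ)
    (A : Matrix (Fin n) (Fin n) ℝ)
    (hA01 : ∀ i j, A i j = 0 ∨ A i j = 1)
    (hsym : ∀ i j, A i j = A j i)
    (hdiag : ∀ i, A i i = 0)
    (hedge : ∃ i j, A i j ≠ 0)
    (d : Fin n → ℝ) (hd : d = A.mulVec 1)
    (c : ℕ → ℝ) (hc : ∀ k, 0 ≤ c k)
    (hodd : ∀ k : ℕ, Even k → c k = 0)
    (hsummable : ∀ i, Summable fun k : ℕ => c k * ((A ^ k).mulVec 1) i)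
    (x : Fin n → ℝ) (hx : ∀ i, x i = ∑' k : ℕ, c k * ((A ^ k).mulVec 1) i) :
    (n : ℝ) * (d ⬝ᵥ x) ≥ (∑ i, d i) * (∑ i, x i) := by
  have hA : A.IsHermitian := by
    ext i j; simpa [conjTranspose_apply] using hsym j i
  set U : Matrix (Fin n) (Fin n) ℝ := (hA.eigenvectorUnitary : Matrix (Fin n) (Fin n) ℝ) with hUdef
  set μ : Fin n → ℝ := hA.eigenvalues with hμ
  have hUU : star U * U = 1 := Unitary.coe_star_mul_self hA.eigenvectorUnitary
  have hUU' : U * star U = 1 := Unitary.coe_mul_star_self hA.eigenvectorUnitary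
  have hspec : A = U * diagonal μ * star U := by simpa using hA.spectral_theorem
  have hpow : ∀ k : ℕ, A ^ k = U * (diagonal μ) ^ k * star U := by
    intro k; induction k with
    | zero => simp [hUU']
    | succ k ih =>
      rw [pow_succ, ih, pow_succ, hspec]
      simp only [Matrix.mul_assoc]
      rw [← Matrix.mul_assoc (star U) U, hUU, Matrix.one_mul]
  set v : Fin n → ℝ := (star U).mulVec 1 with hv
  have hvec : vecMul (1 : Fin n → ℝ) U = v := by
    ext j; simp [hv, vecMul, mulVec, dotProduct, conjTranspose_apply]
  have key : ∀ k : ℕ, (1 : Fin n → ℝ) ⬝ᵥ ((A ^ k).mulVec 1) = ∑ i, v i ^ 2 * μ i ^ k := by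
    intro k
    rw [hpow, ← mulVec_mulVec, ← mulVec_mulVec, dotProduct_mulVec, hvec, diagonal_pow]
    simp only [mulVec_diagonal, dotProduct, Pi.pow_apply]
    exact Finset.sum_congr rfl fun i _ => by ring
  have hvecA : vecMul (1 : Fin n → ℝ) A = A.mulVec 1 := by
    ext j; simp only [vecMul, mulVec, dotProduct, Pi.one_apply, one_mul, mul_one]
    exact Finset.sum_congr rfl fun i _ => hsym i j
  have hdk : ∀ k : ℕ, d ⬝ᵥ ((A ^ k).mulVec 1) = (1 : Fin n → ℝ) ⬝ᵥ ((A ^ (k+1)).mulVec 1) := by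
    intro k
    rw [hd, pow_succ', ← mulVec_mulVec]
    conv_rhs => rw [dotProduct_mulVec, hvecA]
  have hS0 : (n : ℝ) = ∑ i, v i ^ 2 := by
    have h := key 0
    simp only [pow_zero, mul_one] at h
    rw [← h]
    simp [dotProduct]
  have hS1 : ∑ i, d i = ∑ i, v i ^ 2 * μ i := by
    have h := key 1
    simp only [pow_one] at h
    rw [← h, hd]
    simp [dotProduct]
  have hw : ∀ i, (0:ℝ) ≤ v i ^ 2 := fun i => sq_nonneg _
  -- summability of the two series
  have hFeq : (fun k => c k * ((1 : Fin n → ℝ) ⬝ᵥ ((A ^ k).mulVec 1)))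
      = fun k => ∑ i, c k * ((A ^ k).mulVec 1) i := by
    funext k; rw [dotProduct, Finset.mul_sum]
    exact Finset.sum_congr rfl fun i _ => by simp
  have hGeq : (fun k => c k * (d ⬝ᵥ ((A ^ k).mulVec 1)))
      = fun k => ∑ i, d i * (c k * ((A ^ k).mulVec 1) i) := by
    funext k; rw [dotProduct, Finset.mul_sum]
    exact Finset.sum_congr rfl fun i _ => by ring
  have hF : Summable (fun k => c k * ((1 : Fin n → ℝ) ⬝ᵥ ((A ^ k).mulVec 1))) := by
    rw [hFeq]; exact summable_sum fun i _ => hsummable i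
  have hG : Summable (fun k => c k * (d ⬝ᵥ ((A ^ k).mulVec 1))) := by
    rw [hGeq]; exact summable_sum fun i _ => (hsummable i).mul_left (d i)
  -- expressing the two sums as tsums
  have hxsum : ∑ i, x i = ∑' k, c k * ((1 : Fin n → ℝ) ⬝ᵥ ((A ^ k).mulVec 1)) := by
    simp_rw [hx]
    rw [hFeq, ← Summable.tsum_finsetSum (fun i _ => hsummable i)]
  have hdxsum : d ⬝ᵥ x = ∑' k, c k * (d ⬝ᵥ ((A ^ k).mulVec 1)) := by
    rw [dotProduct]
    simp_rw [hx, ← tsum_mul_left]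
    rw [hGeq, ← Summable.tsum_finsetSum (fun i _ => (hsummable i).mul_left (d i))]
  -- reduce to a termwise inequality
  rw [ge_iff_le, hdxsum, hxsum, ← tsum_mul_left, ← tsum_mul_left]
  refine Summable.tsum_le_tsum ?_ (hF.mul_left _) (hG.mul_left _)
  intro k
  rcases Nat.even_or_odd k with hk | hk
  · simp [hodd k hk]
  · rw [key k, hdk k, key (k + 1), hS1, hS0]
    have h1 := cheb_aux (fun i => v i ^ 2) μ (fun i => sq_nonneg _) hk
    calc (∑ i, v i ^ 2 * μ i) * (c k * ∑ i, v i ^ 2 * μ i ^ k)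
        = c k * ((∑ i, v i ^ 2 * μ i) * ∑ i, v i ^ 2 * μ i ^ k) := by ring
      _ ≤ c k * ((∑ i, v i ^ 2) * ∑ i, v i ^ 2 * μ i ^ (k + 1)) :=
          mul_le_mul_of_nonneg_left h1 (hc k)
      _ = (∑ i, v i ^ 2) * (c k * ∑ i, v i ^ 2 * μ i ^ (k + 1)) := by ring
end

section
/- Let A be the adjacency matrix of an undirected, unweighted graph on n nodes with at least one edge that is not regular (the degree vector d = A·1 is not constant). Then there exists α* > 0 such that for all α with 0 < α < α*, the Katz centrality vector x(α) = ∑ₖ αᵏ·Aᵏ·1 is well defined (each entry is a convergent series) and the strict generalized friendship paradox inequality holds: n·(dᵀx(α)) > (1ᵀd)·(1ᵀx(α)). -/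
set_option maxHeartbeats 1000000
open Matrix

lemma katz_aux_v (n : ℕ) (A : Matrix (Fin n) (Fin n) ℝ)
    (hA0 : ∀ i j, 0 ≤ A i j) (hA1 : ∀ i j, A i j ≤ 1) :
    ∀ k i, 0 ≤ ((A ^ k).mulVec 1) i ∧ ((A ^ k).mulVec 1) i ≤ (n:ℝ)^k := by
  intro k
  induction k with
  | zero => intro i; simp [Matrix.mulVec, dotProduct, Matrix.one_apply]
  | succ k ih =>
    intro i
    have h : (A ^ (k+1)).mulVec 1 = A.mulVec ((A ^ k).mulVec 1) := by
      rw [pow_succ', mulVec_mulVec]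
    rw [h, Matrix.mulVec, dotProduct]
    constructor
    · exact Finset.sum_nonneg fun j _ => mul_nonneg (hA0 i j) (ih j).1
    · calc (∑ j, A i j * ((A ^ k).mulVec 1) j)
          ≤ ∑ _j : Fin n, 1 * (n:ℝ)^k :=
            Finset.sum_le_sum fun j _ => mul_le_mul (hA1 i j) (ih j).2 (ih j).1 zero_le_one
        _ = (n:ℝ)^(k+1) := by simp [Finset.card_univ]; ring

/-- **Katz centrality paradox for non-regular graphs.** If the graph (with at least one
edge) is not regular, then there is an `α* > 0` such that for all `0 < α < α*` the Katz
series converges entrywise and the strict generalized friendship paradox inequality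
holds: `n·(dᵀx(α)) > (1ᵀd)·(1ᵀx(α))`. -/
theorem katz_centrality_paradox_small_alpha (n : ℕ)
    (A : Matrix (Fin n) (Fin n) ℝ)
    (hA01 : ∀ i j, A i j = 0 ∨ A i j = 1)
    (hsym : ∀ i j, A i j = A j i)
    (hdiag : ∀ i, A i i = 0)
    (hedge : ∃ i j, A i j ≠ 0)
    (d : Fin n → ℝ) (hd : d = A.mulVec 1)
    (hnonreg : ¬ ∀ i j, d i = d j) :
    ∃ αstar : ℝ, 0 < αstar ∧ ∀ α : ℝ, 0 < α → α < αstar →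
      (∀ i, Summable fun k : ℕ => α ^ k * ((A ^ k).mulVec 1) i) ∧
      (n : ℝ) * (d ⬝ᵥ fun i => ∑' k : ℕ, α ^ k * ((A ^ k).mulVec 1) i) >
        (∑ i, d i) * (∑ i, ∑' k : ℕ, α ^ k * ((A ^ k).mulVec 1) i) := by
  have hA0 : ∀ i j, 0 ≤ A i j := fun i j => by rcases hA01 i j with h | h <;> simp [h]
  have hA1 : ∀ i j, A i j ≤ 1 := fun i j => by rcases hA01 i j with h | h <;> simp [h]
  have hv := katz_aux_v n A hA0 hA1
  obtain ⟨p, q, hpq⟩ : ∃ p q, d p ≠ d q := by push_neg at hnonreg; exact hnonreg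
  have hn0 : 0 < n := p.pos
  have hnR : (0:ℝ) < n := by exact_mod_cast hn0
  set v : ℕ → Fin n → ℝ := fun k i => ((A ^ k).mulVec 1) i with hvdef
  have hv0 : ∀ i, v 0 i = 1 := fun i => by simp [hvdef, Matrix.mulVec, dotProduct, Matrix.one_apply]
  have hv1 : ∀ i, v 1 i = d i := fun i => by simp [hvdef, hd]
  -- degree bounds
  have hd0 : ∀ i, 0 ≤ d i := fun i => by
    have := (hv 1 i).1; simpa [pow_one, ← hd] using this
  have hdn : ∀ i, d i ≤ n := fun i => by
    have := (hv 1 i).2; simpa [pow_one, ← hd] using this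
  set S : ℝ := ∑ i, d i with hS
  set Q : ℝ := ∑ i, (d i)^2 with hQ
  set c1 : ℝ := n * Q - S^2 with hc1def
  have hSn : S ≤ n^2 := by
    calc S ≤ ∑ _i : Fin n, (n:ℝ) := Finset.sum_le_sum fun i _ => hdn i
      _ = n^2 := by simp [Finset.card_univ]; ring
  have hS0 : 0 ≤ S := Finset.sum_nonneg fun i _ => hd0 i
  -- Cauchy-Schwarz gap
  have hkey : ∑ i, ∑ j, (d i - d j)^2 = 2 * c1 := by
    have h1 : ∀ i : Fin n, ∑ j, (d i - d j)^2 = n * (d i)^2 - 2 * d i * S + Q := by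
      intro i
      have : ∀ j : Fin n, (d i - d j)^2 = (d i)^2 - 2 * d i * d j + (d j)^2 := fun j => by ring
      simp only [this, Finset.sum_add_distrib, Finset.sum_sub_distrib, Finset.sum_const,
        Finset.card_univ, Fintype.card_fin, ← Finset.mul_sum, nsmul_eq_mul, ← hS, ← hQ]
      try ring
    simp only [h1, Finset.sum_add_distrib, Finset.sum_sub_distrib, Finset.sum_const,
      Finset.card_univ, Fintype.card_fin, ← Finset.mul_sum, ← Finset.sum_mul, nsmul_eq_mul,
      ← hS, ← hQ, hc1def]
    ring
  have hc1 : 0 < c1 := by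
    have hpos : 0 < ∑ i, ∑ j, (d i - d j)^2 := by
      apply Finset.sum_pos'
      · intro i _; exact Finset.sum_nonneg fun j _ => sq_nonneg _
      · refine ⟨p, Finset.mem_univ p, Finset.sum_pos' (fun j _ => sq_nonneg _) ⟨q, Finset.mem_univ q, ?_⟩⟩
        have := sub_ne_zero.mpr hpq
        positivity
    rw [hkey] at hpos; linarith
  refine ⟨min (1/(2*n)) (c1/(2*n^5)), lt_min (by positivity) (by positivity), ?_⟩
  intro α hα hαlt
  have hα1 : α * n < 1/2 := by
    have h := lt_of_lt_of_le hαlt (min_le_left _ _)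
    rw [lt_div_iff₀ (by positivity)] at h; linarith
  have hα2 : α < c1/(2*n^5) := lt_of_lt_of_le hαlt (min_le_right _ _)
  have hαn0 : 0 ≤ α * n := by positivity
  have hαn1 : α * n < 1 := by linarith
  -- summability of the entrywise series
  have hsummi : ∀ i, Summable fun k : ℕ => α ^ k * v k i := by
    intro i
    apply Summable.of_nonneg_of_le
      (fun k => mul_nonneg (pow_nonneg hα.le _) (hv k i).1)
      (fun k => ?_) (summable_geometric_of_lt_one hαn0 hαn1)
    calc α ^ k * v k i ≤ α ^ k * (n:ℝ)^k :=
          mul_le_mul_of_nonneg_left (hv k i).2 (pow_nonneg hα.le _)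
      _ = (α * n)^k := (mul_pow _ _ _).symm
  refine ⟨hsummi, ?_⟩
  -- swap sums
  have hswap : ∀ w : Fin n → ℝ, (∑ i, w i * ∑' k : ℕ, α ^ k * v k i)
      = ∑' k : ℕ, ∑ i, w i * (α ^ k * v k i) := by
    intro w
    rw [Summable.tsum_finsetSum (fun i _ => (hsummi i).mul_left (w i))]
    exact Finset.sum_congr rfl fun i _ => (tsum_mul_left).symm
  set a : ℕ → ℝ := fun k => ∑ i, d i * v k i with ha
  set b : ℕ → ℝ := fun k => ∑ i, v k i with hb
  have hdot : (d ⬝ᵥ fun i => ∑' k : ℕ, α ^ k * v k i) = ∑' k : ℕ, α ^ k * a k := by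
    rw [dotProduct, hswap d]
    exact tsum_congr fun k => by rw [ha, Finset.mul_sum]; exact Finset.sum_congr rfl fun i _ => by ring
  have hones : (∑ i, ∑' k : ℕ, α ^ k * v k i) = ∑' k : ℕ, α ^ k * b k := by
    have := hswap (fun _ => 1)
    simp only [one_mul] at this
    rw [this]
    exact tsum_congr fun k => by rw [hb, Finset.mul_sum]
  -- bounds on a, b
  have ha0 : ∀ k, 0 ≤ a k := fun k => Finset.sum_nonneg fun i _ => mul_nonneg (hd0 i) (hv k i).1
  have hb0 : ∀ k, 0 ≤ b k := fun k => Finset.sum_nonneg fun i _ => (hv k i).1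
  have hbub : ∀ k, b k ≤ (n:ℝ)^(k+1) := by
    intro k
    calc b k ≤ ∑ _i : Fin n, (n:ℝ)^k := Finset.sum_le_sum fun i _ => (hv k i).2
      _ = (n:ℝ)^(k+1) := by simp [Finset.card_univ]; ring
  set c : ℕ → ℝ := fun k => n * a k - S * b k with hc
  have hsa : Summable fun k => α ^ k * a k := by
    have : (fun k => α ^ k * a k) = fun k => ∑ i, d i * (α ^ k * v k i) := by
      funext k; rw [ha, Finset.mul_sum]; exact Finset.sum_congr rfl fun i _ => by ring
    rw [this]; exact summable_sum fun i _ => (hsummi i).mul_left (d i)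
  have hsb : Summable fun k => α ^ k * b k := by
    have : (fun k => α ^ k * b k) = fun k => ∑ i, (1:ℝ) * (α ^ k * v k i) := by
      funext k; rw [hb, Finset.mul_sum]; exact Finset.sum_congr rfl fun i _ => by ring
    rw [this]; exact summable_sum fun i _ => (hsummi i).mul_left 1
  have hsc : Summable fun k => α ^ k * c k := by
    have : (fun k => α ^ k * c k)
        = fun k => (n:ℝ) * (α ^ k * a k) - S * (α ^ k * b k) := by
      funext k; rw [hc]; ring
    rw [this]; exact (hsa.mul_left _).sub (hsb.mul_left _)
  -- reduce goal to positivity of ∑' αᵏ cₖ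
  rw [hdot, hones, gt_iff_lt, ← sub_pos]
  have hrw : (n:ℝ) * (∑' k : ℕ, α ^ k * a k) - S * (∑' k : ℕ, α ^ k * b k)
      = ∑' k : ℕ, α ^ k * c k := by
    rw [← tsum_mul_left, ← tsum_mul_left, ← Summable.tsum_sub (hsa.mul_left _) (hsb.mul_left _)]
    exact tsum_congr fun k => by rw [hc]; ring
  rw [hrw]
  -- values of c at 0 and 1
  have hc0 : c 0 = 0 := by
    simp only [hc, ha, hb, hv0]
    simp [Finset.card_univ, ← hS]
    ring
  have haQ : a 1 = Q := by
    rw [ha, hQ]; exact Finset.sum_congr rfl fun i _ => by rw [hv1 i]; ring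
  have hbS : b 1 = S := by
    rw [hb, hS]; exact Finset.sum_congr rfl fun i _ => hv1 i
  have hc1v : c 1 = c1 := by
    rw [hc]; simp only [haQ, hbS, hc1def, sq]
  -- lower bound on tail terms
  have hclb : ∀ k, -((n:ℝ)^(k+3)) ≤ c k := by
    intro k
    have h1 : S * b k ≤ (n:ℝ)^2 * (n:ℝ)^(k+1) :=
      mul_le_mul hSn (hbub k) (hb0 k) (by positivity)
    have h2 : (0:ℝ) ≤ (n:ℝ) * a k := mul_nonneg hnR.le (ha0 k)
    have : (n:ℝ)^2 * (n:ℝ)^(k+1) = (n:ℝ)^(k+3) := by ring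
    rw [this] at h1
    simp only [hc]; linarith
  -- split off first two terms
  rw [Summable.tsum_eq_zero_add hsc]
  have hsc1 : Summable fun k => α ^ (k+1) * c (k+1) := (summable_nat_add_iff 1).2 hsc
  rw [Summable.tsum_eq_zero_add hsc1]
  have hsc2 : Summable fun k => α ^ (k+1+1) * c (k+1+1) := (summable_nat_add_iff 1).2 hsc1
  -- tail bound
  have hgeo : Summable fun k : ℕ => -((α^2 * (n:ℝ)^5) * (α*n)^k) :=
    ((summable_geometric_of_lt_one hαn0 hαn1).mul_left _).neg
  have htail : -((α^2 * (n:ℝ)^5) * (1 - α*n)⁻¹) ≤ ∑' k : ℕ, α ^ (k+1+1) * c (k+1+1) := by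
    have hle : ∀ k : ℕ, -((α^2 * (n:ℝ)^5) * (α*n)^k) ≤ α ^ (k+1+1) * c (k+1+1) := by
      intro k
      have h1 : -((n:ℝ)^(k+1+1+3)) ≤ c (k+1+1) := hclb (k+1+1)
      have h2 : α ^ (k+1+1) * (-((n:ℝ)^(k+1+1+3))) ≤ α ^ (k+1+1) * c (k+1+1) :=
        mul_le_mul_of_nonneg_left h1 (by positivity)
      have heq : -((α^2 * (n:ℝ)^5) * (α*n)^k) = α ^ (k+1+1) * (-((n:ℝ)^(k+1+1+3))) := by
        rw [mul_pow]; ring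
      rw [heq]; exact h2
    have := Summable.tsum_le_tsum hle hgeo hsc2
    calc -((α^2 * (n:ℝ)^5) * (1 - α*n)⁻¹)
        = ∑' k : ℕ, -((α^2 * (n:ℝ)^5) * (α*n)^k) := by
          rw [tsum_neg, tsum_mul_left, tsum_geometric_of_lt_one hαn0 hαn1]
      _ ≤ _ := this
  -- finish
  have hinv : (1 - α*n)⁻¹ ≤ 2 := by
    rw [inv_le_comm₀ (by linarith) (by norm_num)]
    linarith
  have hb1 : (α^2 * (n:ℝ)^5) * (1 - α*n)⁻¹ ≤ (α^2 * (n:ℝ)^5) * 2 :=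
    mul_le_mul_of_nonneg_left hinv (by positivity)
  have hfin : 2 * (α^2 * (n:ℝ)^5) < α * c1 := by
    rw [lt_div_iff₀ (by positivity)] at hα2
    nlinarith [mul_lt_mul_of_pos_left hα2 hα]
  simp only [pow_zero, one_mul, hc0, zero_add, hc1v]
  norm_num
  linarith [htail, hb1, hfin]
end

section
/- Let A be the adjacency matrix of a strongly connected directed, unweighted graph on n nodes, and let x ∈ ℝⁿ be a right Perron–Frobenius eigenvector: a vector with all entries strictly positive satisfying A·x = λ·x for some real λ > 0. Then the in-degree generalized friendship paradox inequality n·(dⁱⁿᵀx) ≥ (1ᵀdⁱⁿ)·(1ᵀx), where dⁱⁿ = Aᵀ·1, holds if and only if n·λ ≥ 1ᵀA·1. -/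
open Matrix

/-- For a strongly connected directed graph with right Perron–Frobenius eigenvector `x`
(`Ax = λx`, `x > 0`, `λ > 0`), the in-degree generalized friendship paradox
`n·(dⁱⁿᵀx) ≥ (1ᵀdⁱⁿ)·(1ᵀx)` holds if and only if `n·λ ≥ 1ᵀA·1`. -/
theorem right_eigenvector_in_degree_paradox_iff (n : ℕ)
    (A : Matrix (Fin n) (Fin n) ℝ)
    (hA01 : ∀ i j, A i j = 0 ∨ A i j = 1)
    (hconn : ∀ i j, ∃ k : ℕ, 1 ≤ k ∧ 0 < (A ^ k) i j)
    (x : Fin n → ℝ) (hx : ∀ i, 0 < x i)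
    (lam : ℝ) (hlam : 0 < lam) (heig : A.mulVec x = lam • x)
    (din : Fin n → ℝ) (hdin : din = Aᵀ.mulVec 1) :
    (n : ℝ) * (din ⬝ᵥ x) ≥ (∑ i, din i) * (∑ i, x i) ↔
      (n : ℝ) * lam ≥ ∑ i, ∑ j, A i j := by
  have hdotx : din ⬝ᵥ x = lam * ∑ i, x i := by
    subst hdin
    have h1 : ∀ i, (Aᵀ.mulVec 1) i = ∑ j, A j i := by
      intro i
      simp [mulVec, dotProduct, transpose]
    calc (Aᵀ.mulVec 1) ⬝ᵥ x = ∑ i, (∑ j, A j i) * x i := by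
          simp only [dotProduct, h1]
      _ = ∑ j, ∑ i, A j i * x i := by
          rw [Finset.sum_comm]
          simp [Finset.sum_mul]
      _ = ∑ j, (A.mulVec x) j := by simp [mulVec, dotProduct]
      _ = lam * ∑ i, x i := by
          rw [heig]
          simp [Finset.mul_sum]
  have hsumdin : ∑ i, din i = ∑ i, ∑ j, A i j := by
    subst hdin
    simp only [mulVec, dotProduct, transpose_apply, Pi.one_apply, mul_one]
    exact Finset.sum_comm
  rw [hdotx, hsumdin]
  rcases Nat.eq_zero_or_pos n with h0 | hn
  · subst h0
    simp
  · have hS : 0 < ∑ i, x i := Finset.sum_pos (fun i _ => hx i) (by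
      simp [Finset.univ_nonempty_iff, Fin.pos_iff_nonempty.mp hn])
    constructor
    · intro h
      have := le_of_mul_le_mul_right (by linarith [h] : (∑ i, ∑ j, A i j) * (∑ i, x i) ≤ ((n:ℝ) * lam) * (∑ i, x i)) hS
      linarith
    · intro h
      have := mul_le_mul_of_nonneg_right h hS.le
      calc (∑ i, ∑ j, A i j) * (∑ i, x i) ≤ ((n:ℝ) * lam) * (∑ i, x i) := this
        _ = (n : ℝ) * (lam * ∑ i, x i) := by ring
end

section
/- Let A be the 3×3 matrix with rows (0,1,1), (0,0,1), (1,0,0). If x ∈ ℝ³ has all entries strictly positive and A·x = μ·x for some real μ, then μ³ = μ + 1 and μ < 4/3; in particular the Perron–Frobenius eigenvalue of this strongly connected directed graph is strictly smaller than its average out/in degree 4/3 = (1ᵀA·1)/3. -/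
open Matrix

/-- For the strongly connected directed graph with adjacency matrix
`A = !![0,1,1; 0,0,1; 1,0,0]`, any positive eigenvector has eigenvalue `μ` satisfying
`μ³ = μ + 1` and `μ < 4/3`: the Perron–Frobenius eigenvalue is strictly smaller than the
average out/in degree `4/3 = (1ᵀA·1)/3`. -/
theorem perron_eigenvalue_below_average_degree_example
    (A : Matrix (Fin 3) (Fin 3) ℝ)
    (hA : A = !![0, 1, 1; 0, 0, 1; 1, 0, 0])
    (x : Fin 3 → ℝ) (hx : ∀ i, 0 < x i)
    (μ : ℝ) (heig : A.mulVec x = μ • x) :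
    μ ^ 3 = μ + 1 ∧ μ < 4 / 3 := by
  subst hA
  have h0 := congrFun heig 0
  have h1 := congrFun heig 1
  have h2 := congrFun heig 2
  simp [mulVec, dotProduct, Fin.sum_univ_three] at h0 h1 h2
  have hx0 := hx 0
  have hx1 := hx 1
  have hx2 := hx 2
  have hμ : 0 < μ := by nlinarith
  have hcube : μ ^ 3 = μ + 1 := by
    have : μ ^ 3 * x 1 = (μ + 1) * x 1 := by linear_combination (-1)*h0 + (1-μ^2)*h1 + (-μ)*h2
    have := mul_right_cancel₀ (ne_of_gt hx1) this
    linarith [this]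
  exact ⟨hcube, by nlinarith [sq_nonneg (μ - 4/3), sq_nonneg μ]⟩
end

section
/- Let A be the adjacency matrix of a directed, unweighted graph on n nodes with at least one edge, let dᵒᵘᵗ = A·1, and suppose that for every k ≥ 1 the inequality n·(1ᵀAᵀAᵏ·1) ≥ (1ᵀAᵏ·1)·(1ᵀA·1) holds. Then for every α > 0 such that the Katz series x(α) = ∑ₖ αᵏ·Aᵏ·1 converges entrywise (in particular for all 0 < α < 1/ρ(A)), the out-degree generalized friendship paradox inequality holds: n·(dᵒᵘᵗᵀx(α)) ≥ (1ᵀdᵒᵘᵗ)·(1ᵀx(α)). -/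
/-!
The gap `n·(dᵀx) − (1ᵀd)(1ᵀx)` is linear in `x`, and the Katz vector is the nonnegative
combination `∑ αᵏ·(Aᵏ1)`. The gap vanishes at `A⁰1 = 1` and is nonnegative at `Aᵏ1` for `k ≥ 1`,
since there it is the hypothesis on `1ᵀAᵀAᵏ1`; hence it is nonnegative at the sum.
-/

open Matrix

namespace Matrix

variable {l m n R : Type*} [Fintype l] [Fintype m] [Fintype n]

theorem sum_mulVec_one [NonAssocSemiring R] (M : Matrix m n R) :
    ∑ i, (M *ᵥ 1) i = ∑ i, ∑ j, M i j := by
  simp [mulVec, dotProduct]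

theorem mulVec_one_dotProduct_mulVec_one [CommSemiring R] (A : Matrix l m R)
    (B : Matrix l n R) : (A *ᵥ 1) ⬝ᵥ (B *ᵥ 1) = ∑ i, ∑ j, (Aᵀ * B) i j := by
  rw [← sum_mulVec_one, ← one_dotProduct, ← mulVec_mulVec, dotProduct_mulVec 1 Aᵀ,
    vecMul_transpose]

end Matrix

section FriendshipParadox

variable {ι β : Type*} [Fintype ι]

theorem dotProduct_tsum_nonneg (w : ι → ℝ) {c : β → ℝ} {v : β → ι → ℝ} (hc : ∀ k, 0 ≤ c k)
    (hsum : ∀ i, Summable fun k => c k * v k i) (hv : ∀ k, 0 ≤ w ⬝ᵥ v k) :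
    0 ≤ w ⬝ᵥ fun i => ∑' k, c k * v k i := by
  have hswap : (w ⬝ᵥ fun i => ∑' k, c k * v k i) = ∑' k, c k * (w ⬝ᵥ v k) :=
    calc (w ⬝ᵥ fun i => ∑' k, c k * v k i) = ∑ i, ∑' k, w i * (c k * v k i) := by
          simp only [dotProduct, tsum_mul_left]
      _ = ∑' k, ∑ i, w i * (c k * v k i) :=
          (Summable.tsum_finsetSum fun i _ => (hsum i).mul_left (w i)).symm
      _ = ∑' k, c k * (w ⬝ᵥ v k) := by
          simp only [dotProduct, Finset.mul_sum, mul_left_comm]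
  rw [hswap]
  exact tsum_nonneg fun k => mul_nonneg (hc k) (hv k)

def FriendshipParadox (d x : ι → ℝ) : Prop :=
  (∑ i, d i) * (∑ i, x i) ≤ Fintype.card ι * (d ⬝ᵥ x)

theorem friendshipParadox_iff_dotProduct_nonneg (d x : ι → ℝ) :
    FriendshipParadox d x ↔ 0 ≤ (Fintype.card ι • d - (∑ i, d i) • 1) ⬝ᵥ x := by
  rw [FriendshipParadox, sub_dotProduct, smul_dotProduct, smul_dotProduct, one_dotProduct,
    nsmul_eq_mul, smul_eq_mul, sub_nonneg]

theorem friendshipParadox_one (d : ι → ℝ) : FriendshipParadox d 1 := by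
  simp [FriendshipParadox, dotProduct_one, mul_comm]

theorem FriendshipParadox.tsum {d : ι → ℝ} {c : β → ℝ} {v : β → ι → ℝ} (hc : ∀ k, 0 ≤ c k)
    (hsum : ∀ i, Summable fun k => c k * v k i) (hv : ∀ k, FriendshipParadox d (v k)) :
    FriendshipParadox d fun i => ∑' k, c k * v k i := by
  simp only [friendshipParadox_iff_dotProduct_nonneg] at hv ⊢
  exact dotProduct_tsum_nonneg _ hc hsum hv

end FriendshipParadox

theorem directed_katz_out_degree_paradox_sufficient_general (n : ℕ)
    (A : Matrix (Fin n) (Fin n) ℝ)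
    (dout : Fin n → ℝ) (hdout : dout = A.mulVec 1)
    (hcond : ∀ k : ℕ, 1 ≤ k →
      (n : ℝ) * (∑ i, ∑ j, (Aᵀ * A ^ k) i j) ≥
        (∑ i, ∑ j, (A ^ k) i j) * (∑ i, ∑ j, A i j)) :
    ∀ α : ℝ, 0 < α →
      (∀ i, Summable fun k : ℕ => α ^ k * ((A ^ k).mulVec 1) i) →
      (n : ℝ) * (dout ⬝ᵥ fun i => ∑' k : ℕ, α ^ k * ((A ^ k).mulVec 1) i) ≥
        (∑ i, dout i) * (∑ i, ∑' k : ℕ, α ^ k * ((A ^ k).mulVec 1) i) := by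
  intro α hα hsum
  subst hdout
  have hterm : ∀ k : ℕ, FriendshipParadox (A *ᵥ 1) (A ^ k *ᵥ 1) := by
    rintro (_ | k)
    · simpa using friendshipParadox_one (A *ᵥ 1)
    · rw [FriendshipParadox, Fintype.card_fin, sum_mulVec_one, sum_mulVec_one,
        mulVec_one_dotProduct_mulVec_one]
      linarith [hcond (k + 1) (Nat.le_add_left 1 k)]
  simpa only [FriendshipParadox, Fintype.card_fin, ge_iff_le] using
    FriendshipParadox.tsum (fun k => (pow_pos hα k).le) hsum hterm

/-- Sufficient condition for the out-degree generalized friendship paradox for Katz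
centrality on a directed graph: if `n·(1ᵀAᵀAᵏ·1) ≥ (1ᵀAᵏ·1)·(1ᵀA·1)` for all `k ≥ 1`,
then for every `α > 0` for which the Katz series converges entrywise,
`n·(dᵒᵘᵗᵀx(α)) ≥ (1ᵀdᵒᵘᵗ)·(1ᵀx(α))`. -/
theorem directed_katz_out_degree_paradox_sufficient (n : ℕ)
    (A : Matrix (Fin n) (Fin n) ℝ)
    (hA01 : ∀ i j, A i j = 0 ∨ A i j = 1)
    (hedge : ∃ i j, A i j ≠ 0)
    (dout : Fin n → ℝ) (hdout : dout = A.mulVec 1)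
    (hcond : ∀ k : ℕ, 1 ≤ k →
      (n : ℝ) * (∑ i, ∑ j, (Aᵀ * A ^ k) i j) ≥
        (∑ i, ∑ j, (A ^ k) i j) * (∑ i, ∑ j, A i j)) :
    ∀ α : ℝ, 0 < α →
      (∀ i, Summable fun k : ℕ => α ^ k * ((A ^ k).mulVec 1) i) →
      (n : ℝ) * (dout ⬝ᵥ fun i => ∑' k : ℕ, α ^ k * ((A ^ k).mulVec 1) i) ≥
        (∑ i, dout i) * (∑ i, ∑' k : ℕ, α ^ k * ((A ^ k).mulVec 1) i) :=
  directed_katz_out_degree_paradox_sufficient_general n A dout hdout hcond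
end

section
/- Let A be an n×n 0-1 matrix (adjacency matrix of a directed graph) with at least one edge whose out-degree vector dᵒᵘᵗ = A·1 is not constant. Then there exists α* > 0 such that for all α with 0 < α < α*, the Katz series x(α) = ∑ₖ αᵏ·Aᵏ·1 converges entrywise and the strict out-degree generalized friendship paradox inequality holds: n·(dᵒᵘᵗᵀx(α)) > (1ᵀdᵒᵘᵗ)·(1ᵀx(α)). -/
open Matrix

/-- For a directed graph with at least one edge whose out-degree vector is not constant,
there is an `α* > 0` such that for all `0 < α < α*` the Katz series converges entrywise
and the strict out-degree generalized friendship paradox inequality holds: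
`n·(dᵒᵘᵗᵀx(α)) > (1ᵀdᵒᵘᵗ)·(1ᵀx(α))`. -/
theorem directed_katz_out_degree_paradox_small_alpha (n : ℕ)
    (A : Matrix (Fin n) (Fin n) ℝ)
    (hA01 : ∀ i j, A i j = 0 ∨ A i j = 1)
    (hedge : ∃ i j, A i j ≠ 0)
    (dout : Fin n → ℝ) (hdout : dout = A.mulVec 1)
    (hnonreg : ¬ ∀ i j, dout i = dout j) :
    ∃ αstar : ℝ, 0 < αstar ∧ ∀ α : ℝ, 0 < α → α < αstar →
      (∀ i, Summable fun k : ℕ => α ^ k * ((A ^ k).mulVec 1) i) ∧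
      (n : ℝ) * (dout ⬝ᵥ fun i => ∑' k : ℕ, α ^ k * ((A ^ k).mulVec 1) i) >
        (∑ i, dout i) * (∑ i, ∑' k : ℕ, α ^ k * ((A ^ k).mulVec 1) i) := by
  push_neg at hnonreg
  obtain ⟨i0, j0, hij⟩ := hnonreg
  set N : ℝ := (n : ℝ) with hNdef
  have hn0 : 0 < n := i0.pos
  have hNpos : 0 < N := by rw [hNdef]; exact_mod_cast hn0
  have hN1 : (1 : ℝ) ≤ N := by rw [hNdef]; exact_mod_cast hn0
  have hA0 : ∀ i j, 0 ≤ A i j := by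
    intro i j; rcases hA01 i j with h | h <;> simp [h]
  have hA1 : ∀ i j, A i j ≤ 1 := by
    intro i j; rcases hA01 i j with h | h <;> simp [h]
  -- bounds on powers
  have hs : ∀ k : ℕ, ∀ i, 0 ≤ ((A ^ k).mulVec 1) i ∧ ((A ^ k).mulVec 1) i ≤ N ^ k := by
    intro k
    induction k with
    | zero => intro i; simp [Matrix.one_mulVec]
    | succ k ih =>
      intro i
      have hrw : ((A ^ (k + 1)).mulVec 1) i = ∑ j, A i j * ((A ^ k).mulVec 1) j := by
        rw [pow_succ', ← Matrix.mulVec_mulVec]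
        simp [Matrix.mulVec, dotProduct]
      constructor
      · rw [hrw]
        exact Finset.sum_nonneg fun j _ => mul_nonneg (hA0 i j) (ih j).1
      · rw [hrw]
        have hterm : ∀ j ∈ Finset.univ, A i j * ((A ^ k).mulVec 1) j ≤ N ^ k := by
          intro j _
          calc A i j * ((A ^ k).mulVec 1) j ≤ 1 * N ^ k :=
                mul_le_mul (hA1 i j) (ih j).2 (ih j).1 zero_le_one
            _ = N ^ k := one_mul _
        calc ∑ j, A i j * ((A ^ k).mulVec 1) j ≤ ∑ _j : Fin n, N ^ k :=
              Finset.sum_le_sum hterm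
          _ = N ^ (k + 1) := by
              rw [Finset.sum_const, Finset.card_univ, Fintype.card_fin, nsmul_eq_mul, pow_succ']
  set d := dout with hd
  have hd0 : ∀ i, 0 ≤ d i := by
    intro i
    have h := (hs 1 i).1
    rw [pow_one] at h
    rw [hdout]
    exact h
  have hdN : ∀ i, d i ≤ N := by
    intro i
    have h := (hs 1 i).2
    simp only [pow_one] at h
    rw [hdout]
    exact h
  -- Cauchy-Schwarz strict
  set S := ∑ i, d i with hS
  set c1 : ℝ := N * (∑ i, d i ^ 2) - S ^ 2 with hc1def
  have hc1 : 0 < c1 := by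
    have key : ∑ i, (N * d i - S) ^ 2 = N * c1 := by
      have h1 : ∀ i ∈ Finset.univ, (N * d i - S) ^ 2
          = N ^ 2 * d i ^ 2 - 2 * N * S * d i + S ^ 2 := fun i _ => by ring
      rw [Finset.sum_congr rfl h1, Finset.sum_add_distrib, Finset.sum_sub_distrib,
        ← Finset.mul_sum, ← Finset.mul_sum, Finset.sum_const, Finset.card_univ,
        Fintype.card_fin, nsmul_eq_mul, hc1def, hS]
      ring
    have hne : ∑ i, (N * d i - S) ^ 2 ≠ 0 := by
      intro h
      have hall := (Finset.sum_eq_zero_iff_of_nonneg (fun i _ => sq_nonneg (N * d i - S))).mp h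
      have e1 : N * d i0 = S := by
        have := hall i0 (Finset.mem_univ i0)
        have := pow_eq_zero_iff (n := 2) (by norm_num) |>.mp this
        linarith
      have e2 : N * d j0 = S := by
        have := hall j0 (Finset.mem_univ j0)
        have := pow_eq_zero_iff (n := 2) (by norm_num) |>.mp this
        linarith
      exact hij (mul_left_cancel₀ hNpos.ne' (e1.trans e2.symm))
    have hpos : 0 < ∑ i, (N * d i - S) ^ 2 :=
      lt_of_le_of_ne (Finset.sum_nonneg fun i _ => sq_nonneg _) (Ne.symm hne)
    nlinarith [key, hpos, hNpos]
  refine ⟨min (1 / (2 * N)) (c1 / (4 * N ^ 5 + 1)), lt_min (by positivity) (by positivity),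
    fun α hα hαlt => ?_⟩
  have hα1 : α < 1 / (2 * N) := lt_of_lt_of_le hαlt (min_le_left _ _)
  have hα2 : α < c1 / (4 * N ^ 5 + 1) := lt_of_lt_of_le hαlt (min_le_right _ _)
  have hβ0 : 0 ≤ α * N := mul_nonneg hα.le hNpos.le
  have hβhalf : α * N ≤ 1 / 2 := by
    rw [lt_div_iff₀ (by positivity)] at hα1
    linarith
  have hβ1 : α * N < 1 := by linarith
  -- summability
  have hsummable : ∀ i, Summable fun k : ℕ => α ^ k * ((A ^ k).mulVec 1) i := by
    intro i
    apply Summable.of_nonneg_of_le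
      (fun k => mul_nonneg (pow_nonneg hα.le k) (hs k i).1)
      (fun k => ?_) (summable_geometric_of_lt_one hβ0 hβ1)
    calc α ^ k * ((A ^ k).mulVec 1) i ≤ α ^ k * N ^ k :=
          mul_le_mul_of_nonneg_left (hs k i).2 (pow_nonneg hα.le k)
      _ = (α * N) ^ k := (mul_pow _ _ _).symm
  refine ⟨hsummable, ?_⟩
  -- remainder
  set r : Fin n → ℝ := fun i => ∑' k : ℕ, α ^ (k + 2) * ((A ^ (k + 2)).mulVec 1) i with hrdef
  have hsum2 : ∀ i, Summable fun k : ℕ => α ^ (k + 2) * ((A ^ (k + 2)).mulVec 1) i := by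
    intro i
    exact (summable_nat_add_iff (f := fun k : ℕ => α ^ k * ((A ^ k).mulVec 1) i) 2).mpr
      (hsummable i)
  have hr0 : ∀ i, 0 ≤ r i := by
    intro i
    exact tsum_nonneg fun k => mul_nonneg (pow_nonneg hα.le _) (hs _ i).1
  have hrle : ∀ i, r i ≤ 2 * (α * N) ^ 2 := by
    intro i
    have hgeo : Summable fun k : ℕ => (α * N) ^ (k + 2) :=
      (summable_nat_add_iff 2).mpr (summable_geometric_of_lt_one hβ0 hβ1)
    have hle : r i ≤ ∑' k : ℕ, (α * N) ^ (k + 2) := by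
      apply Summable.tsum_le_tsum _ (hsum2 i) hgeo
      intro k
      calc α ^ (k + 2) * ((A ^ (k + 2)).mulVec 1) i ≤ α ^ (k + 2) * N ^ (k + 2) :=
            mul_le_mul_of_nonneg_left (hs _ i).2 (pow_nonneg hα.le _)
        _ = (α * N) ^ (k + 2) := (mul_pow _ _ _).symm
    have heq : ∑' k : ℕ, (α * N) ^ (k + 2) = (1 - α * N)⁻¹ * (α * N) ^ 2 := by
      have : ∀ k : ℕ, (α * N) ^ (k + 2) = (α * N) ^ k * (α * N) ^ 2 := fun k => pow_add _ _ _
      rw [tsum_congr this, tsum_mul_right, tsum_geometric_of_lt_one hβ0 hβ1]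
    have hinv : (1 - α * N)⁻¹ ≤ 2 := by
      rw [inv_le_comm₀ (by linarith) (by norm_num)]
      linarith
    rw [heq] at hle
    nlinarith [sq_nonneg (α * N), hle, hinv]
  -- series expansion
  have hg : ∀ i, (∑' k : ℕ, α ^ k * ((A ^ k).mulVec 1) i) = 1 + α * d i + r i := by
    intro i
    have h1 := Summable.tsum_eq_zero_add (hsummable i)
    have hs1 : Summable fun k : ℕ => α ^ (k + 1) * ((A ^ (k + 1)).mulVec 1) i :=
      (summable_nat_add_iff (f := fun k : ℕ => α ^ k * ((A ^ k).mulVec 1) i) 1).mpr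
        (hsummable i)
    have h2 := Summable.tsum_eq_zero_add hs1
    have e0 : α ^ (0 : ℕ) * ((A ^ (0 : ℕ)).mulVec 1) i = 1 := by
      simp [Matrix.one_mulVec]
    have e1 : α ^ (0 + 1 : ℕ) * ((A ^ (0 + 1 : ℕ)).mulVec 1) i = α * d i := by
      simp [hdout]
    rw [h1, h2, e0, e1, hrdef]
    have hcong : (∑' (b : ℕ), α ^ (b + 1 + 1) * ((A ^ (b + 1 + 1)).mulVec 1) i)
        = ∑' (k : ℕ), α ^ (k + 2) * ((A ^ (k + 2)).mulVec 1) i := rfl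
    rw [hcong]
    ring
  -- final computation
  have hgoal1 : (dout ⬝ᵥ fun i => ∑' k : ℕ, α ^ k * ((A ^ k).mulVec 1) i)
      = S + α * (∑ i, d i ^ 2) + ∑ i, d i * r i := by
    simp only [dotProduct]
    have : ∀ i ∈ Finset.univ, d i * (∑' k : ℕ, α ^ k * ((A ^ k).mulVec 1) i)
        = d i + α * d i ^ 2 + d i * r i := fun i _ => by rw [hg i]; ring
    rw [Finset.sum_congr rfl this, Finset.sum_add_distrib, Finset.sum_add_distrib,
      ← Finset.mul_sum, hS]
  have hgoal2 : (∑ i, ∑' k : ℕ, α ^ k * ((A ^ k).mulVec 1) i) = N + α * S + ∑ i, r i := by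
    have : ∀ i ∈ Finset.univ, (∑' k : ℕ, α ^ k * ((A ^ k).mulVec 1) i)
        = 1 + α * d i + r i := fun i _ => hg i
    rw [Finset.sum_congr rfl this, Finset.sum_add_distrib, Finset.sum_add_distrib,
      ← Finset.mul_sum, Finset.sum_const, Finset.card_univ, Fintype.card_fin,
      nsmul_eq_mul, mul_one, hS]
  rw [hgoal1, hgoal2]
  -- bounds on aggregate quantities
  have hSd_le : S ≤ N ^ 2 := by
    rw [hS]
    calc ∑ i, d i ≤ ∑ _i : Fin n, N := Finset.sum_le_sum fun i _ => hdN i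
      _ = N ^ 2 := by
        rw [Finset.sum_const, Finset.card_univ, Fintype.card_fin, nsmul_eq_mul]; ring
  have hSd0 : 0 ≤ S := hS ▸ Finset.sum_nonneg fun i _ => hd0 i
  have hSr_le : (∑ i, r i) ≤ N * (2 * (α * N) ^ 2) := by
    calc ∑ i, r i ≤ ∑ _i : Fin n, 2 * (α * N) ^ 2 := Finset.sum_le_sum fun i _ => hrle i
      _ = N * (2 * (α * N) ^ 2) := by
        rw [Finset.sum_const, Finset.card_univ, Fintype.card_fin, nsmul_eq_mul]
  have hSr0 : 0 ≤ ∑ i, r i := Finset.sum_nonneg fun i _ => hr0 i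
  have hSdr0 : 0 ≤ ∑ i, d i * r i :=
    Finset.sum_nonneg fun i _ => mul_nonneg (hd0 i) (hr0 i)
  have hprod : S * (∑ i, r i) ≤ 2 * α ^ 2 * N ^ 5 := by
    calc S * (∑ i, r i) ≤ N ^ 2 * (N * (2 * (α * N) ^ 2)) :=
          mul_le_mul hSd_le hSr_le hSr0 (by positivity)
      _ = 2 * α ^ 2 * N ^ 5 := by ring
  have hαc : α * (4 * N ^ 5 + 1) < c1 := by
    rw [lt_div_iff₀ (by positivity)] at hα2
    exact hα2
  have hkey : 2 * α ^ 2 * N ^ 5 < α * c1 := by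
    nlinarith [mul_lt_mul_of_pos_left hαc hα, sq_nonneg α, pow_pos hNpos 5, hα]
  have hSSr : S * (∑ i, r i) < α * (N * (∑ i, d i ^ 2) - S ^ 2) := by
    calc S * (∑ i, r i) ≤ 2 * α ^ 2 * N ^ 5 := hprod
      _ < α * c1 := hkey
      _ = α * (N * (∑ i, d i ^ 2) - S ^ 2) := by rw [hc1def]
  have hNSdr : 0 ≤ N * (∑ i, d i * r i) := mul_nonneg hNpos.le hSdr0
  have hfin : N * (S + α * (∑ i, d i ^ 2) + ∑ i, d i * r i) - S * (N + α * S + ∑ i, r i)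
      = α * (N * (∑ i, d i ^ 2) - S ^ 2) + N * (∑ i, d i * r i) - S * (∑ i, r i) := by
    ring
  linarith [hfin, hSSr, hNSdr]
end
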